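/- arXiv:2111.02177 — 4 statements merged into one kernel-verified Lean document; each statement's English description precedes it below -/
import Mathlib

section
/- Let A and B be symmetric real d×d matrices with A ⪯ I and B positive semidefinite. Then the matrix exponential satisfies e^{A − B} ⪯ I + A − B + 2A² + 2B². -/
private lemma exp_le_one_add_add_sq {x : ℝ} (hx : x ≤ 1) :
    Real.exp x ≤ 1 + x + x ^ 2 := by
  rcases le_or_gt x (-1) with h | h
  · have h1 : Real.exp x ≤ Real.exp (-1) := Real.exp_le_exp.2 h
    have h2 : Real.exp (-1) < 1 := Real.exp_lt_one_iff.2 (by norm_num)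
    nlinarith
  · have hx1 : |x| ≤ 1 := abs_le.2 ⟨h.le, hx⟩
    have hb := Real.exp_bound hx1 (by norm_num : 0 < 3)
    norm_num [Finset.sum_range_succ, Nat.factorial] at hb
    have h3 : |x| ^ 3 ≤ |x| ^ 2 := pow_le_pow_of_le_one (abs_nonneg x) hx1 (by norm_num)
    rw [sq_abs] at h3
    rw [abs_le] at hb
    nlinarith [hb.1, hb.2]

private lemma isHermitian_of_isSymm {d : ℕ} {M : Matrix (Fin d) (Fin d) ℝ}
    (h : M.IsSymm) : M.IsHermitian := by
  rw [Matrix.IsHermitian, Matrix.conjTranspose]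
  ext i j
  simpa using congrFun (congrFun h i) j

open Matrix in
private lemma key_psd {d : ℕ} (M : Matrix (Fin d) (Fin d) ℝ) (hM : M.IsHermitian)
    (hle : ((1 : Matrix (Fin d) (Fin d) ℝ) - M).PosSemidef) :
    ((1 : Matrix (Fin d) (Fin d) ℝ) + M + M * M - NormedSpace.exp M).PosSemidef := by
  set u : Matrix (Fin d) (Fin d) ℝ := (hM.eigenvectorUnitary : Matrix (Fin d) (Fin d) ℝ) with hu
  set μ := hM.eigenvalues with hμ
  have hD : (RCLike.ofReal ∘ μ : Fin d → ℝ) = μ := by funext i; simp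
  have hs : M = u * Matrix.diagonal μ * star u := by
    have := hM.spectral_theorem
    rwa [hD] at this
  have hu2 : u * star u = 1 := (Matrix.mem_unitaryGroup_iff).mp hM.eigenvectorUnitary.2
  have hu1 : star u * u = 1 := (Matrix.mem_unitaryGroup_iff').mp hM.eigenvectorUnitary.2
  have hinv : u⁻¹ = star u := Matrix.inv_eq_right_inv hu2
  have hUnit : IsUnit u := ⟨⟨u, star u, hu2, hu1⟩, rfl⟩
  -- eigenvalues are at most 1
  have heig : ∀ i, μ i ≤ 1 := by
    intro i
    have hconj := hle.conjTranspose_mul_mul_same u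
    have hu1' : uᴴ * u = 1 := hu1
    have hcal : uᴴ * ((1 : Matrix (Fin d) (Fin d) ℝ) - M) * u
        = Matrix.diagonal (fun i => 1 - μ i) := by
      rw [Matrix.mul_sub, Matrix.sub_mul, mul_one, hs]
      rw [show uᴴ * (u * Matrix.diagonal μ * star u) * u
          = (uᴴ * u) * Matrix.diagonal μ * (uᴴ * u) by
        rw [← Matrix.star_eq_conjTranspose]; noncomm_ring]
      rw [hu1', one_mul, mul_one]
      rw [← Matrix.diagonal_one, Matrix.diagonal_sub]
    rw [hcal] at hconj
    have := (Matrix.posSemidef_diagonal_iff).mp hconj i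
    linarith
  have hscal : ∀ i, 0 ≤ 1 + μ i + μ i ^ 2 - Real.exp (μ i) := fun i => by
    have := exp_le_one_add_add_sq (heig i); linarith
  have hexpD : NormedSpace.exp (Matrix.diagonal μ)
      = Matrix.diagonal (fun i => Real.exp (μ i)) := by
    rw [Matrix.exp_diagonal]
    congr 1
    funext i
    rw [Pi.exp_def, Real.exp_eq_exp_ℝ]
  have hexp : NormedSpace.exp M = u * Matrix.diagonal (fun i => Real.exp (μ i)) * star u := by
    calc NormedSpace.exp M = NormedSpace.exp (u * Matrix.diagonal μ * u⁻¹) := by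
          rw [hinv, ← hs]
      _ = u * NormedSpace.exp (Matrix.diagonal μ) * u⁻¹ := Matrix.exp_conj u _ hUnit
      _ = _ := by rw [hinv, hexpD]
  have hMM : M * M = u * (Matrix.diagonal μ * Matrix.diagonal μ) * star u := by
    rw [hs]
    rw [show u * Matrix.diagonal μ * star u * (u * Matrix.diagonal μ * star u)
      = u * Matrix.diagonal μ * (star u * u) * (Matrix.diagonal μ * star u) by noncomm_ring]
    rw [hu1]
    noncomm_ring
  have hdiag : (1 : Matrix (Fin d) (Fin d) ℝ) + Matrix.diagonal μ
      + Matrix.diagonal μ * Matrix.diagonal μ - Matrix.diagonal (fun i => Real.exp (μ i))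
      = Matrix.diagonal (fun i => 1 + μ i + μ i ^ 2 - Real.exp (μ i)) := by
    rw [Matrix.diagonal_mul_diagonal, ← Matrix.diagonal_one, Matrix.diagonal_add,
      Matrix.diagonal_add, Matrix.diagonal_sub]
    exact congrArg Matrix.diagonal (funext fun i => by ring)
  have hkey : (1 : Matrix (Fin d) (Fin d) ℝ) + M + M * M - NormedSpace.exp M
      = u * Matrix.diagonal (fun i => 1 + μ i + μ i ^ 2 - Real.exp (μ i)) * star u := by
    rw [← hdiag, hMM, hexp, hs]
    have h1 : u * ((1 : Matrix (Fin d) (Fin d) ℝ) + Matrix.diagonal μ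
        + Matrix.diagonal μ * Matrix.diagonal μ - Matrix.diagonal (fun i => Real.exp (μ i)))
        * star u
        = u * 1 * star u + u * Matrix.diagonal μ * star u
          + u * (Matrix.diagonal μ * Matrix.diagonal μ) * star u
          - u * Matrix.diagonal (fun i => Real.exp (μ i)) * star u := by noncomm_ring
    rw [h1, mul_one, hu2]
  rw [hkey]
  exact (Matrix.PosSemidef.diagonal hscal).mul_mul_conjTranspose_same u

/-- Fact 4.3: for symmetric `A ⪯ I` and PSD `B`,
`e^{A - B} ⪯ I + A - B + 2A² + 2B²` in the Loewner order. -/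
theorem stmt1 {d : ℕ} (A B : Matrix (Fin d) (Fin d) ℝ)
    (hA : A.IsSymm) (hB : B.IsSymm)
    (hAle : ((1 : Matrix (Fin d) (Fin d) ℝ) - A).PosSemidef)
    (hBpsd : B.PosSemidef) :
    ((1 : Matrix (Fin d) (Fin d) ℝ) + A - B + (2 : ℝ) • (A * A) + (2 : ℝ) • (B * B)
      - NormedSpace.exp (A - B)).PosSemidef := by
  set M := A - B with hMdef
  have hMh : M.IsHermitian :=
    (isHermitian_of_isSymm hA).sub (isHermitian_of_isSymm hB)
  have hMle : ((1 : Matrix (Fin d) (Fin d) ℝ) - M).PosSemidef := by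
    have : (1 : Matrix (Fin d) (Fin d) ℝ) - M = ((1 : Matrix (Fin d) (Fin d) ℝ) - A) + B := by
      rw [hMdef]; abel
    rw [this]
    exact hAle.add hBpsd
  have h1 := key_psd M hMh hMle
  have hABh : (A + B).IsHermitian := (isHermitian_of_isSymm hA).add (isHermitian_of_isSymm hB)
  have h2 : ((A + B) * (A + B)).PosSemidef := by
    have := Matrix.posSemidef_conjTranspose_mul_self (A + B)
    rwa [hABh.eq] at this
  have hsum := h1.add h2
  have heq : ((1 : Matrix (Fin d) (Fin d) ℝ) + M + M * M - NormedSpace.exp M)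
      + (A + B) * (A + B)
      = (1 : Matrix (Fin d) (Fin d) ℝ) + A - B + (2 : ℝ) • (A * A) + (2 : ℝ) • (B * B)
        - NormedSpace.exp (A - B) := by
    rw [hMdef, two_smul ℝ (A * A), two_smul ℝ (B * B)]
    noncomm_ring
  rwa [heq] at hsum
end

section
/- A k-homogeneous distribution μ on {0,1}^n is ℓ∞-independent with parameter D (i.e., ‖p_u − p‖₁ ≤ D for all u with p(u) > 0, and similarly for all conditionings on subsets) if and only if it is average multiplicatively independent with parameter D (i.e., E_{v∼ν}[ |p_v(u) − p(u)| ] ≤ (D/k)·p(u) for all u, and similarly under conditionings). -/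
open scoped Classical
open Finset

/-- Probability of an event under a distribution `μ` on `{0,1}^n`. -/
noncomputable def pr {n : ℕ} (μ : (Fin n → Bool) → ℝ) (E : (Fin n → Bool) → Prop) : ℝ :=
  ∑ ξ : Fin n → Bool, if E ξ then μ ξ else 0

/-- The marginal vector `p(j) = E_{ξ∼μ}[ξ_j]`. -/
noncomputable def marg {n : ℕ} (μ : (Fin n → Bool) → ℝ) (j : Fin n) : ℝ :=
  pr μ (fun ξ => ξ j = true)

/-- The conditional marginal `p_v(j) = E[ξ_j | ξ_v = 1]` (junk value `0` when `p(v) = 0`). -/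
noncomputable def cmarg {n : ℕ} (μ : (Fin n → Bool) → ℝ) (v j : Fin n) : ℝ :=
  pr μ (fun ξ => ξ v = true ∧ ξ j = true) / marg μ v

/-- `μ` is a probability distribution. -/
def IsDistrib {n : ℕ} (μ : (Fin n → Bool) → ℝ) : Prop :=
  (∀ ξ, 0 ≤ μ ξ) ∧ ∑ ξ : Fin n → Bool, μ ξ = 1

/-- `μ` is `k`-homogeneous: every outcome has exactly `k` ones. -/
def Homog {n : ℕ} (μ : (Fin n → Bool) → ℝ) (k : ℕ) : Prop :=
  ∀ ξ, μ ξ ≠ 0 → (Finset.univ.filter fun i => ξ i = true).card = k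

/-- The distribution `ν(v) = p(v)/k` on `[n]`. -/
noncomputable def nu {n : ℕ} (μ : (Fin n → Bool) → ℝ) (k : ℕ) (v : Fin n) : ℝ :=
  marg μ v / k

lemma pr_nonneg {n : ℕ} {μ : (Fin n → Bool) → ℝ} (h : ∀ ξ, 0 ≤ μ ξ)
    (E : (Fin n → Bool) → Prop) : 0 ≤ pr μ E :=
  Finset.sum_nonneg fun ξ _ => by by_cases hE : E ξ <;> simp [pr, hE, h ξ]

lemma pr_mono {n : ℕ} {μ : (Fin n → Bool) → ℝ} (h : ∀ ξ, 0 ≤ μ ξ)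
    {E F : (Fin n → Bool) → Prop} (hEF : ∀ ξ, E ξ → F ξ) : pr μ E ≤ pr μ F := by
  apply Finset.sum_le_sum
  intro ξ _
  by_cases hE : E ξ
  · simp [hE, hEF ξ hE]
  · simp only [hE, if_false]
    by_cases hF : F ξ <;> simp [hF, h ξ]

lemma pr_symm {n : ℕ} (μ : (Fin n → Bool) → ℝ) (u v : Fin n) :
    pr μ (fun ξ => ξ u = true ∧ ξ v = true) = pr μ (fun ξ => ξ v = true ∧ ξ u = true) := by
  simp only [pr, and_comm]
  exact Finset.sum_congr rfl fun ξ _ => by split_ifs <;> rfl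

/-- Key identity: `p(v)·|p_v(u) − p(u)| = |P(v,u) − p(v)p(u)|`. -/
lemma key {n : ℕ} {μ : (Fin n → Bool) → ℝ} (h : ∀ ξ, 0 ≤ μ ξ) (v u : Fin n) :
    marg μ v * |cmarg μ v u - marg μ u| =
      |pr μ (fun ξ => ξ v = true ∧ ξ u = true) - marg μ v * marg μ u| := by
  rcases eq_or_lt_of_le (pr_nonneg h (fun ξ => ξ v = true)) with h0 | h0
  · have hP : pr μ (fun ξ => ξ v = true ∧ ξ u = true) = 0 :=
      le_antisymm (h0 ▸ pr_mono h fun ξ hξ => hξ.1) (pr_nonneg h _)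
    simp [marg, ← h0, hP]
  · have h0' : 0 < marg μ v := h0
    have hne : marg μ v ≠ 0 := ne_of_gt h0'
    have hd : cmarg μ v u - marg μ u =
        (pr μ (fun ξ => ξ v = true ∧ ξ u = true) - marg μ v * marg μ u) / marg μ v := by
      rw [cmarg]
      field_simp
    rw [hd, abs_div, abs_of_pos h0', mul_div_cancel₀ _ hne]

/-- A `k`-homogeneous distribution is `ℓ∞`-independent with parameter `D` iff it is
average multiplicatively independent with parameter `D`. -/
theorem stmt5 {n k : ℕ} (μ : (Fin n → Bool) → ℝ) (D : ℝ) (hk : 1 ≤ k)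
    (hμ : IsDistrib μ) (hhom : Homog μ k) :
    (∀ u : Fin n, 0 < marg μ u → ∑ j : Fin n, |cmarg μ u j - marg μ j| ≤ D) ↔
    (∀ u : Fin n, ∑ v : Fin n, nu μ k v * |cmarg μ v u - marg μ u| ≤ D / k * marg μ u) := by
  obtain ⟨hpos, -⟩ := hμ
  have hk0 : (0:ℝ) < k := by exact_mod_cast hk
  have hsum : ∀ u : Fin n, ∑ v : Fin n, nu μ k v * |cmarg μ v u - marg μ u| =
      (∑ v : Fin n, |pr μ (fun ξ => ξ v = true ∧ ξ u = true) - marg μ v * marg μ u|) / k := by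
    intro u
    rw [Finset.sum_div]
    refine Finset.sum_congr rfl fun v _ => ?_
    rw [← key hpos v u, nu]
    ring
  have heq : ∀ u : Fin n,
      ∑ v : Fin n, |pr μ (fun ξ => ξ v = true ∧ ξ u = true) - marg μ v * marg μ u| =
        marg μ u * ∑ j : Fin n, |cmarg μ u j - marg μ j| := by
    intro u
    rw [Finset.mul_sum]
    refine Finset.sum_congr rfl fun v _ => ?_
    rw [key hpos u v, pr_symm]
    congr 1
    ring
  constructor
  · intro H u
    rw [hsum, heq]
    rcases eq_or_lt_of_le (pr_nonneg hpos (fun ξ => ξ u = true)) with h0 | h0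
    · have hmu : marg μ u = 0 := h0.symm
      rw [hmu]
      simp
    · have h0' : 0 < marg μ u := h0
      rw [div_le_iff₀ hk0]
      calc marg μ u * ∑ j : Fin n, |cmarg μ u j - marg μ j| ≤ marg μ u * D :=
            mul_le_mul_of_nonneg_left (H u h0') (le_of_lt h0')
        _ = D / k * marg μ u * k := by field_simp
  · intro H u h0
    have hle := H u
    rw [hsum, heq, div_le_iff₀ hk0] at hle
    have h2 : marg μ u * ∑ j : Fin n, |cmarg μ u j - marg μ j| ≤ marg μ u * D := by
      calc marg μ u * ∑ j : Fin n, |cmarg μ u j - marg μ j| ≤ D / k * marg μ u * k := hle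
        _ = marg μ u * D := by field_simp
    exact le_of_mul_le_mul_left h2 h0
end

section
/- Let μ be a k-homogeneous distribution on {0,1}^n (k ≥ 1) that is ℓ∞-independent with parameter D_inf and average multiplicatively independent with parameter D_am, and let Y₁,…,Yₙ be symmetric d×d matrices with 0 ⪯ Y_i ⪯ I. With Z_v = Σ_i Y_i (p_v(i) − p(i)) and ν(v) = p(v)/k, the averaged second moment satisfies E_{v∼ν}[Z_v²] ⪯ D_inf · D_am · E_{v∼ν}[Y_v]. -/
open scoped Classical
open Finset

/-- The matrix `Z_v = Σ_i (p_v(i) − p(i))·Y_i`. -/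
noncomputable def Zmat {n d : ℕ} (μ : (Fin n → Bool) → ℝ)
    (Y : Fin n → Matrix (Fin d) (Fin d) ℝ) (v : Fin n) : Matrix (Fin d) (Fin d) ℝ :=
  ∑ i : Fin n, (cmarg μ v i - marg μ i) • Y i

section Aux
open Matrix

lemma mulVec_sum' {m ι : Type*} [Fintype m] {nn : ℕ} (s : Finset ι)
    (f : ι → Matrix (Fin nn) m ℝ) (x : m → ℝ) :
    (∑ i ∈ s, f i) *ᵥ x = ∑ i ∈ s, (f i *ᵥ x) := by
  ext j
  simp [Matrix.mulVec, dotProduct, Matrix.sum_apply, Finset.sum_mul]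
  rw [Finset.sum_comm]

lemma dotProduct_sum' {m ι : Type*} [Fintype m] (s : Finset ι)
    (x : m → ℝ) (g : ι → m → ℝ) :
    x ⬝ᵥ (∑ i ∈ s, g i) = ∑ i ∈ s, x ⬝ᵥ g i := by
  simp [dotProduct, Finset.sum_apply, Finset.mul_sum]
  rw [Finset.sum_comm]

lemma sum_dotProduct' {m ι : Type*} [Fintype m] (s : Finset ι)
    (g : ι → m → ℝ) (x : m → ℝ) :
    (∑ i ∈ s, g i) ⬝ᵥ x = ∑ i ∈ s, g i ⬝ᵥ x := by
  rw [dotProduct_comm, dotProduct_sum']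
  exact Finset.sum_congr rfl fun i _ => dotProduct_comm _ _

lemma psd_sub_sq {d : ℕ} {A : Matrix (Fin d) (Fin d) ℝ} (h0 : A.PosSemidef)
    (h1 : ((1 : Matrix (Fin d) (Fin d) ℝ) - A).PosSemidef) : (A - A * A).PosSemidef := by
  obtain ⟨s, h1s, hss⟩ : ∃ s : Matrix (Fin d) (Fin d) ℝ, sᴴ = s ∧ s * s = A :=
    by
      open scoped MatrixOrder in
      exact ⟨CFC.sqrt A, (CFC.sqrt_nonneg A).posSemidef.1, CFC.sqrt_mul_sqrt_self A h0.nonneg⟩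
  have key : s * (1 - A) * sᴴ = A - A * A := by
    rw [h1s, Matrix.mul_sub, Matrix.mul_one, Matrix.sub_mul, hss, ← hss]
    congr 1
    noncomm_ring
  exact key ▸ h1.mul_mul_conjTranspose_same s

lemma vecMul_eq_mulVec_of_symm {d : ℕ} {A : Matrix (Fin d) (Fin d) ℝ} (hA : Aᵀ = A)
    (x : Fin d → ℝ) : x ᵥ* A = A *ᵥ x := by
  rw [← hA, Matrix.vecMul_transpose, hA]

lemma quad_mul_self {d : ℕ} {A : Matrix (Fin d) (Fin d) ℝ} (hA : Aᵀ = A)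
    (x : Fin d → ℝ) : x ⬝ᵥ (A * A) *ᵥ x = (A *ᵥ x) ⬝ᵥ (A *ᵥ x) := by
  rw [← Matrix.mulVec_mulVec, Matrix.dotProduct_mulVec, vecMul_eq_mulVec_of_symm hA]

lemma dot_self_nonneg {d : ℕ} (v : Fin d → ℝ) : 0 ≤ v ⬝ᵥ v :=
  Finset.sum_nonneg fun a _ => mul_self_nonneg (v a)

/-- Key pointwise bound: `xᵀ Z² x ≤ D · Σᵢ |cᵢ| xᵀ Yᵢ x` when `Σ|cᵢ| ≤ D`. -/
lemma key_pointwise {n d : ℕ} (c : Fin n → ℝ) (Y : Fin n → Matrix (Fin d) (Fin d) ℝ)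
    (hYs : ∀ i, (Y i).IsSymm) (hY0 : ∀ i, (Y i).PosSemidef)
    (hY1 : ∀ i, ((1 : Matrix (Fin d) (Fin d) ℝ) - Y i).PosSemidef)
    (x : Fin d → ℝ) (D : ℝ) (hc : ∑ i, |c i| ≤ D) :
    x ⬝ᵥ ((∑ i, c i • Y i) * (∑ i, c i • Y i)) *ᵥ x
      ≤ D * ∑ i, |c i| * (x ⬝ᵥ Y i *ᵥ x) := by
  set Z : Matrix (Fin d) (Fin d) ℝ := ∑ i, c i • Y i with hZ
  set y : Fin n → (Fin d → ℝ) := fun i => Y i *ᵥ x with hy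
  set N : Fin n → ℝ := fun i => Real.sqrt (y i ⬝ᵥ y i) with hN
  have hNsq : ∀ i, N i ^ 2 = y i ⬝ᵥ y i := fun i => Real.sq_sqrt (dot_self_nonneg _)
  have hN0 : ∀ i, 0 ≤ N i := fun i => Real.sqrt_nonneg _
  have hZsym : Zᵀ = Z := by
    rw [hZ, Matrix.transpose_sum]
    exact Finset.sum_congr rfl fun i _ => by rw [Matrix.transpose_smul, hYs i]
  have hw : Z *ᵥ x = ∑ i, c i • y i := by
    rw [hZ, mulVec_sum']
    exact Finset.sum_congr rfl fun i _ => Matrix.smul_mulVec _ _ _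
  have hlhs : x ⬝ᵥ (Z * Z) *ᵥ x = ∑ i, ∑ j, c i * c j * (y i ⬝ᵥ y j) := by
    rw [quad_mul_self hZsym, hw, sum_dotProduct']
    refine Finset.sum_congr rfl fun i _ => ?_
    rw [dotProduct_sum']
    refine Finset.sum_congr rfl fun j _ => ?_
    rw [smul_dotProduct, dotProduct_smul, smul_eq_mul, smul_eq_mul,
      ← mul_assoc]
  have hdot : ∀ i j, |y i ⬝ᵥ y j| ≤ N i * N j := by
    intro i j
    have hcs : (y i ⬝ᵥ y j) ^ 2 ≤ (y i ⬝ᵥ y i) * (y j ⬝ᵥ y j) := by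
      have h := Finset.sum_mul_sq_le_sq_mul_sq Finset.univ (y i) (y j)
      simpa [dotProduct, pow_two] using h
    calc |y i ⬝ᵥ y j| = Real.sqrt ((y i ⬝ᵥ y j) ^ 2) := (Real.sqrt_sq_eq_abs _).symm
      _ ≤ Real.sqrt ((y i ⬝ᵥ y i) * (y j ⬝ᵥ y j)) := Real.sqrt_le_sqrt hcs
      _ = N i * N j := Real.sqrt_mul (dot_self_nonneg _) _
  have step1 : x ⬝ᵥ (Z * Z) *ᵥ x ≤ (∑ i, |c i| * N i) ^ 2 := by
    rw [hlhs, pow_two, Finset.sum_mul_sum]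
    refine Finset.sum_le_sum fun i _ => Finset.sum_le_sum fun j _ => ?_
    calc c i * c j * (y i ⬝ᵥ y j) ≤ |c i * c j * (y i ⬝ᵥ y j)| := le_abs_self _
      _ = |c i| * |c j| * |y i ⬝ᵥ y j| := by rw [abs_mul, abs_mul]
      _ ≤ |c i| * |c j| * (N i * N j) := by
          exact mul_le_mul_of_nonneg_left (hdot i j)
            (mul_nonneg (abs_nonneg _) (abs_nonneg _))
      _ = |c i| * N i * (|c j| * N j) := by ring
  have step2 : (∑ i, |c i| * N i) ^ 2 ≤ (∑ i, |c i|) * ∑ i, |c i| * N i ^ 2 := by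
    have h := Finset.sum_mul_sq_le_sq_mul_sq Finset.univ
      (fun i => Real.sqrt |c i|) (fun i => Real.sqrt |c i| * N i)
    have e1 : ∀ i : Fin n, Real.sqrt |c i| * (Real.sqrt |c i| * N i) = |c i| * N i :=
      fun i => by rw [← mul_assoc, Real.mul_self_sqrt (abs_nonneg _)]
    have e2 : ∀ i : Fin n, (Real.sqrt |c i|) ^ 2 = |c i| :=
      fun i => Real.sq_sqrt (abs_nonneg _)
    have e3 : ∀ i : Fin n, (Real.sqrt |c i| * N i) ^ 2 = |c i| * N i ^ 2 :=
      fun i => by rw [mul_pow, e2]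
    simpa only [e1, e2, e3] using h
  have hNq : ∀ i, N i ^ 2 ≤ x ⬝ᵥ Y i *ᵥ x := by
    intro i
    have h := (psd_sub_sq (hY0 i) (hY1 i)).dotProduct_mulVec_nonneg x
    rw [star_trivial, Matrix.sub_mulVec, dotProduct_sub, sub_nonneg] at h
    rw [hNsq i]
    calc y i ⬝ᵥ y i = x ⬝ᵥ (Y i * Y i) *ᵥ x := (quad_mul_self (hYs i) x).symm
      _ ≤ x ⬝ᵥ Y i *ᵥ x := h
  have hsum0 : (0:ℝ) ≤ ∑ i, |c i| := Finset.sum_nonneg fun i _ => abs_nonneg _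
  have hD0 : (0:ℝ) ≤ D := le_trans hsum0 hc
  calc x ⬝ᵥ (Z * Z) *ᵥ x ≤ (∑ i, |c i| * N i) ^ 2 := step1
    _ ≤ (∑ i, |c i|) * ∑ i, |c i| * N i ^ 2 := step2
    _ ≤ D * ∑ i, |c i| * N i ^ 2 := by
        refine mul_le_mul_of_nonneg_right hc ?_
        exact Finset.sum_nonneg fun i _ => mul_nonneg (abs_nonneg _)
          (by rw [hNsq i]; exact dot_self_nonneg _)
    _ ≤ D * ∑ i, |c i| * (x ⬝ᵥ Y i *ᵥ x) := by
        refine mul_le_mul_of_nonneg_left (Finset.sum_le_sum fun i _ => ?_) hD0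
        exact mul_le_mul_of_nonneg_left (hNq i) (abs_nonneg _)

end Aux

/-- Claim (ii): `E_{v∼ν}[Z_v²] ⪯ D_inf·D_am·E_{v∼ν}[Y_v]`. -/
theorem stmt7 {n d k : ℕ} (μ : (Fin n → Bool) → ℝ) (Dinf Dam : ℝ) (hk : 1 ≤ k)
    (hμ : IsDistrib μ) (hhom : Homog μ k)
    (hinf : ∀ v : Fin n, 0 < marg μ v → ∑ j : Fin n, |cmarg μ v j - marg μ j| ≤ Dinf)
    (ham : ∀ u : Fin n, ∑ v : Fin n, nu μ k v * |cmarg μ v u - marg μ u| ≤ Dam / k * marg μ u)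
    (Y : Fin n → Matrix (Fin d) (Fin d) ℝ)
    (hYs : ∀ i, (Y i).IsSymm) (hY0 : ∀ i, (Y i).PosSemidef)
    (hY1 : ∀ i, ((1 : Matrix (Fin d) (Fin d) ℝ) - Y i).PosSemidef) :
    ((Dinf * Dam) • (∑ v : Fin n, nu μ k v • Y v)
      - ∑ v : Fin n, nu μ k v • (Zmat μ Y v * Zmat μ Y v)).PosSemidef := by
  have hm0 : ∀ v, 0 ≤ marg μ v := by
    intro v
    refine Finset.sum_nonneg fun ξ _ => ?_
    split <;> [exact hμ.1 ξ; exact le_refl 0]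
  have hnu0 : ∀ v, 0 ≤ nu μ k v := fun v => div_nonneg (hm0 v) (Nat.cast_nonneg k)
  have hnuz : ∀ v, marg μ v = 0 → nu μ k v = 0 := by
    intro v h; unfold nu; rw [h, zero_div]
  -- Dinf ≥ 0
  have hDinf : 0 ≤ Dinf := by
    have hex : ∃ ξ, μ ξ ≠ 0 := by
      by_contra h
      push_neg at h
      have h2 := hμ.2
      simp [h] at h2
    obtain ⟨ξ₀, hξ₀⟩ := hex
    have hcard : (Finset.univ.filter fun i => ξ₀ i = true).Nonempty := by
      rw [← Finset.card_pos, hhom ξ₀ hξ₀]; omega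
    obtain ⟨i₀, hi₀⟩ := hcard
    have hi₀' : ξ₀ i₀ = true := (Finset.mem_filter.mp hi₀).2
    have hpos : 0 < marg μ i₀ := by
      unfold marg pr
      refine lt_of_lt_of_le ?_
        (Finset.single_le_sum (fun ξ _ => ?_) (Finset.mem_univ ξ₀))
      · simp only [hi₀']
        exact lt_of_le_of_ne (hμ.1 ξ₀) (Ne.symm hξ₀)
      · dsimp only
        split <;> [exact hμ.1 ξ; exact le_refl 0]
    exact le_trans (Finset.sum_nonneg fun j _ => abs_nonneg _) (hinf i₀ hpos)
  -- Hermitian part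
  open Matrix in
  have hYt : ∀ i, (Y i)ᵀ = Y i := fun i => hYs i
  have hZt : ∀ v, (Zmat μ Y v)ᵀ = Zmat μ Y v := by
    intro v
    unfold Zmat
    rw [Matrix.transpose_sum]
    exact Finset.sum_congr rfl fun i _ => by rw [Matrix.transpose_smul, hYt i]
  refine Matrix.PosSemidef.of_dotProduct_mulVec_nonneg ?_ ?_
  · show _ = _
    have hconj : ∀ A : Matrix (Fin d) (Fin d) ℝ, Aᴴ = Aᵀ := fun A => by
      ext i j; simp [Matrix.conjTranspose_apply]
    rw [hconj, Matrix.transpose_sub, Matrix.transpose_smul, Matrix.transpose_sum,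
      Matrix.transpose_sum]
    congr 1
    · congr 1
      exact Finset.sum_congr rfl fun v _ => by rw [Matrix.transpose_smul, hYt v]
    · refine Finset.sum_congr rfl fun v _ => ?_
      rw [Matrix.transpose_smul, Matrix.transpose_mul, hZt v]
  · intro x
    rw [star_trivial]
    have hexp : x ⬝ᵥ ((Dinf * Dam) • (∑ v : Fin n, nu μ k v • Y v)
        - ∑ v : Fin n, nu μ k v • (Zmat μ Y v * Zmat μ Y v)) *ᵥ x
        = Dinf * Dam * (∑ v : Fin n, nu μ k v * (x ⬝ᵥ Y v *ᵥ x))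
          - ∑ v : Fin n, nu μ k v * (x ⬝ᵥ (Zmat μ Y v * Zmat μ Y v) *ᵥ x) := by
      rw [Matrix.sub_mulVec, dotProduct_sub, Matrix.smul_mulVec,
        dotProduct_smul, mulVec_sum', dotProduct_sum', mulVec_sum', dotProduct_sum']
      congr 1
      · rw [smul_eq_mul]
        congr 1
        exact Finset.sum_congr rfl fun v _ => by
          rw [Matrix.smul_mulVec, dotProduct_smul, smul_eq_mul]
      · exact Finset.sum_congr rfl fun v _ => by
          rw [Matrix.smul_mulVec, dotProduct_smul, smul_eq_mul]
    rw [hexp, sub_nonneg]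
    have hqY : ∀ i, 0 ≤ x ⬝ᵥ Y i *ᵥ x := fun i => by simpa using (hY0 i).dotProduct_mulVec_nonneg x
    calc ∑ v : Fin n, nu μ k v * (x ⬝ᵥ (Zmat μ Y v * Zmat μ Y v) *ᵥ x)
        ≤ ∑ v : Fin n, nu μ k v *
            (Dinf * ∑ i, |cmarg μ v i - marg μ i| * (x ⬝ᵥ Y i *ᵥ x)) := by
          refine Finset.sum_le_sum fun v _ => ?_
          rcases (hm0 v).eq_or_lt with h | h
          · rw [hnuz v h.symm, zero_mul, zero_mul]
          · refine mul_le_mul_of_nonneg_left ?_ (hnu0 v)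
            exact key_pointwise _ Y hYs hY0 hY1 x Dinf (hinf v h)
      _ = ∑ i : Fin n, Dinf *
            ((∑ v : Fin n, nu μ k v * |cmarg μ v i - marg μ i|) * (x ⬝ᵥ Y i *ᵥ x)) := by
          calc ∑ v : Fin n, nu μ k v *
                (Dinf * ∑ i, |cmarg μ v i - marg μ i| * (x ⬝ᵥ Y i *ᵥ x))
              = ∑ v : Fin n, ∑ i : Fin n,
                  Dinf * (nu μ k v * |cmarg μ v i - marg μ i| * (x ⬝ᵥ Y i *ᵥ x)) := by
                refine Finset.sum_congr rfl fun v _ => ?_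
                rw [Finset.mul_sum, Finset.mul_sum]
                exact Finset.sum_congr rfl fun i _ => by ring
            _ = ∑ i : Fin n, ∑ v : Fin n,
                  Dinf * (nu μ k v * |cmarg μ v i - marg μ i| * (x ⬝ᵥ Y i *ᵥ x)) :=
                Finset.sum_comm
            _ = ∑ i : Fin n, Dinf *
                  ((∑ v : Fin n, nu μ k v * |cmarg μ v i - marg μ i|) * (x ⬝ᵥ Y i *ᵥ x)) := by
                refine Finset.sum_congr rfl fun i _ => ?_
                rw [Finset.sum_mul, Finset.mul_sum]
      _ ≤ ∑ i : Fin n, Dinf * ((Dam / k * marg μ i) * (x ⬝ᵥ Y i *ᵥ x)) := by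
          refine Finset.sum_le_sum fun i _ => ?_
          exact mul_le_mul_of_nonneg_left
            (mul_le_mul_of_nonneg_right (ham i) (hqY i)) hDinf
      _ = Dinf * Dam * ∑ i : Fin n, nu μ k i * (x ⬝ᵥ Y i *ᵥ x) := by
          rw [Finset.mul_sum]
          refine Finset.sum_congr rfl fun i _ => ?_
          unfold nu
          ring
end

section
/- Any k-homogeneous distribution on {0,1}^n satisfying the stochastic covering property (SCP) is two-sided ℓ∞-independent with parameter 2: for every subset τ ⊆ [n], every v ∉ τ for which both conditionings are feasible, Σ_{j∈[n]} | E[ξ_j | ξ_v=1, ξ_i=1 ∀i∈τ] − E[ξ_j | ξ_v=0, ξ_i=1 ∀i∈τ] | ≤ 2. -/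
open scoped Classical
open Finset

/-- Probability of an event under a distribution `μ` on `{0,1}^ι`. -/
noncomputable def prI {ι : Type*} [Fintype ι] [DecidableEq ι]
    (μ : (ι → Bool) → ℝ) (E : (ι → Bool) → Prop) : ℝ :=
  ∑ ξ : ι → Bool, if E ξ then μ ξ else 0

/-- The conditional marginal `Pr[ξ_j = 1 | E]` (junk value `0` when `E` is infeasible). -/
noncomputable def cmI {ι : Type*} [Fintype ι] [DecidableEq ι]
    (μ : (ι → Bool) → ℝ) (E : (ι → Bool) → Prop) (j : ι) : ℝ :=
  prI μ (fun ξ => E ξ ∧ ξ j = true) / prI μ E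

/-- One-sided `ℓ∞`-independence with parameter `D`: for every `Λ` and every feasible `i`,
the total `ℓ₁` change of marginals, between conditioning on all of `Λ` being `1` and
additionally on `ξ_i = 1`, is at most `D`. -/
def OneSidedLinf {ι : Type*} [Fintype ι] [DecidableEq ι]
    (μ : (ι → Bool) → ℝ) (D : ℝ) : Prop :=
  ∀ (Λ : Finset ι) (i : ι),
    0 < prI μ (fun ξ => (∀ l ∈ Λ, ξ l = true) ∧ ξ i = true) →
    ∑ j : ι, |cmI μ (fun ξ => (∀ l ∈ Λ, ξ l = true) ∧ ξ i = true) j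
        - cmI μ (fun ξ => ∀ l ∈ Λ, ξ l = true) j| ≤ D

/-- Two-sided `ℓ∞`-independence with parameter `D`: for every `Λ`, boundary condition
`σ` on `Λ`, and feasible `i`, the `ℓ₁` row sum of the two-sided influence matrix is at
most `D`. -/
def TwoSidedLinf {ι : Type*} [Fintype ι] [DecidableEq ι]
    (μ : (ι → Bool) → ℝ) (D : ℝ) : Prop :=
  ∀ (Λ : Finset ι) (σ : ι → Bool) (i : ι),
    0 < prI μ (fun ξ => (∀ l ∈ Λ, ξ l = σ l) ∧ ξ i = true) →
    0 < prI μ (fun ξ => (∀ l ∈ Λ, ξ l = σ l) ∧ ξ i = false) →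
    ∑ j : ι, |cmI μ (fun ξ => (∀ l ∈ Λ, ξ l = σ l) ∧ ξ i = true) j
        - cmI μ (fun ξ => (∀ l ∈ Λ, ξ l = σ l) ∧ ξ i = false) j| ≤ D

/-- `μ` is `k`-homogeneous: every outcome has exactly `k` ones. -/
def HomogI {ι : Type*} [Fintype ι] [DecidableEq ι] (μ : (ι → Bool) → ℝ) (k : ℕ) : Prop :=
  ∀ ξ, μ ξ ≠ 0 → (Finset.univ.filter fun i => ξ i = true).card = k

/-- The stochastic covering property: for every `τ` and `v ∉ τ` with both conditionings
feasible, the two conditional distributions (on `ξ_τ = 1, ξ_v = 0` and on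
`ξ_τ = 1, ξ_v = 1`) admit a coupling `γ` under which, off `τ ∪ {v}`, the `ξ_v = 0`
sample is obtained from the `ξ_v = 1` sample by flipping at most one entry from 0 to 1. -/
def SCP {ι : Type*} [Fintype ι] [DecidableEq ι] (μ : (ι → Bool) → ℝ) : Prop :=
  ∀ (τ : Finset ι) (v : ι), v ∉ τ →
    0 < prI μ (fun ξ => (∀ i ∈ τ, ξ i = true) ∧ ξ v = false) →
    0 < prI μ (fun ξ => (∀ i ∈ τ, ξ i = true) ∧ ξ v = true) →
    ∃ γ : (ι → Bool) × (ι → Bool) → ℝ,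
      (∀ p, 0 ≤ γ p) ∧
      (∀ x : ι → Bool, ∑ y : ι → Bool, γ (x, y)
        = (if (∀ i ∈ τ, x i = true) ∧ x v = false then μ x else 0)
            / prI μ (fun ξ => (∀ i ∈ τ, ξ i = true) ∧ ξ v = false)) ∧
      (∀ y : ι → Bool, ∑ x : ι → Bool, γ (x, y)
        = (if (∀ i ∈ τ, y i = true) ∧ y v = true then μ y else 0)
            / prI μ (fun ξ => (∀ i ∈ τ, ξ i = true) ∧ ξ v = true)) ∧
      (∀ x y : ι → Bool, γ (x, y) ≠ 0 →
        (∀ j, j ∉ τ → j ≠ v → y j = true → x j = true) ∧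
        (Finset.univ.filter fun j => j ∉ τ ∧ j ≠ v ∧ x j ≠ y j).card ≤ 1)

private lemma iteqR {p : Prop} {h1 h2 : Decidable p} (a b : ℝ) :
    (@ite ℝ p h1 a b) = (@ite ℝ p h2 a b) := by
  rw [Subsingleton.elim h1 h2]

/-- A `k`-homogeneous distribution with the stochastic covering property is two-sided
`ℓ∞`-independent with parameter `2`: for every `τ` and `v ∉ τ` with both conditionings
feasible, `Σ_j |E[ξ_j | ξ_v = 1, ξ_τ = 1] − E[ξ_j | ξ_v = 0, ξ_τ = 1]| ≤ 2`. -/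
theorem stmt18 {n k : ℕ} (μ : (Fin n → Bool) → ℝ)
    (hμ0 : ∀ ξ, 0 ≤ μ ξ) (hμ1 : ∑ ξ : Fin n → Bool, μ ξ = 1)
    (hhom : HomogI μ k) (hscp : SCP μ) :
    ∀ (τ : Finset (Fin n)) (v : Fin n), v ∉ τ →
      0 < prI μ (fun ξ => (∀ i ∈ τ, ξ i = true) ∧ ξ v = false) →
      0 < prI μ (fun ξ => (∀ i ∈ τ, ξ i = true) ∧ ξ v = true) →
      ∑ j : Fin n, |cmI μ (fun ξ => (∀ i ∈ τ, ξ i = true) ∧ ξ v = true) j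
          - cmI μ (fun ξ => (∀ i ∈ τ, ξ i = true) ∧ ξ v = false) j| ≤ 2 := by
  intro τ v hv h0 h1
  obtain ⟨γ, hγ0, hrow, hcol, hsupp⟩ := hscp τ v hv h0 h1
  set b : Bool → ℝ := fun t => if t = true then 1 else 0 with hb
  have hpr1 : prI μ (fun ξ => (∀ i ∈ τ, ξ i = true) ∧ ξ v = true)
      = ∑ ξ : Fin n → Bool, if (∀ i ∈ τ, ξ i = true) ∧ ξ v = true then μ ξ else 0 :=
    Finset.sum_congr rfl fun _ _ => iteqR _ _
  have hpr0 : prI μ (fun ξ => (∀ i ∈ τ, ξ i = true) ∧ ξ v = false)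
      = ∑ ξ : Fin n → Bool, if (∀ i ∈ τ, ξ i = true) ∧ ξ v = false then μ ξ else 0 :=
    Finset.sum_congr rfl fun _ _ => iteqR _ _
  have hrow' : ∀ x : Fin n → Bool, ∑ y : Fin n → Bool, γ (x, y)
      = (if (∀ i ∈ τ, x i = true) ∧ x v = false then μ x else 0)
          / prI μ (fun ξ => (∀ i ∈ τ, ξ i = true) ∧ ξ v = false) :=
    fun x => (hrow x).trans (by rw [iteqR (μ x) 0])
  have hcol' : ∀ y : Fin n → Bool, ∑ x : Fin n → Bool, γ (x, y)
      = (if (∀ i ∈ τ, y i = true) ∧ y v = true then μ y else 0)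
          / prI μ (fun ξ => (∀ i ∈ τ, ξ i = true) ∧ ξ v = true) :=
    fun y => (hcol y).trans (by rw [iteqR (μ y) 0])
  have hx : ∀ x y : Fin n → Bool, γ (x, y) ≠ 0 →
      ((∀ i ∈ τ, x i = true) ∧ x v = false) := by
    intro x y hne
    by_contra h
    have hpos : 0 < γ (x, y) := lt_of_le_of_ne (hγ0 _) (Ne.symm hne)
    have hs : 0 < ∑ y', γ (x, y') :=
      lt_of_lt_of_le hpos
        (Finset.single_le_sum (f := fun y' => γ (x, y')) (fun i _ => hγ0 _)
          (Finset.mem_univ y))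
    rw [hrow' x] at hs
    simp [h] at hs
  have hy : ∀ x y : Fin n → Bool, γ (x, y) ≠ 0 →
      ((∀ i ∈ τ, y i = true) ∧ y v = true) := by
    intro x y hne
    by_contra h
    have hpos : 0 < γ (x, y) := lt_of_le_of_ne (hγ0 _) (Ne.symm hne)
    have hs : 0 < ∑ x', γ (x', y) :=
      lt_of_lt_of_le hpos
        (Finset.single_le_sum (f := fun x' => γ (x', y)) (fun i _ => hγ0 _)
          (Finset.mem_univ x))
    rw [hcol' y] at hs
    simp [h] at hs
  -- total mass of γ is 1
  have htot : ∑ x : Fin n → Bool, ∑ y : Fin n → Bool, γ (x, y) = 1 := by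
    have h1' : ∑ x : Fin n → Bool, ∑ y : Fin n → Bool, γ (x, y)
        = (∑ x : Fin n → Bool, if (∀ i ∈ τ, x i = true) ∧ x v = false then μ x else 0)
            / prI μ (fun ξ => (∀ i ∈ τ, ξ i = true) ∧ ξ v = false) := by
      rw [Finset.sum_div]
      exact Finset.sum_congr rfl fun x _ => hrow' x
    rw [h1', div_eq_one_iff_eq (ne_of_gt h0)]
    exact hpr0.symm
  -- marginal formulas
  have hcm1 : ∀ j : Fin n,
      cmI μ (fun ξ => (∀ i ∈ τ, ξ i = true) ∧ ξ v = true) j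
        = ∑ x : Fin n → Bool, ∑ y : Fin n → Bool, γ (x, y) * b (y j) := by
    intro j
    rw [Finset.sum_comm]
    unfold cmI
    have hnum : prI μ (fun ξ => ((∀ i ∈ τ, ξ i = true) ∧ ξ v = true) ∧ ξ j = true)
        = ∑ y : Fin n → Bool,
            (if (∀ i ∈ τ, y i = true) ∧ y v = true then μ y else 0) * b (y j) := by
      refine Finset.sum_congr rfl fun y _ => ?_
      by_cases hj : y j = true
      · by_cases hE : (∀ i ∈ τ, y i = true) ∧ y v = true <;> simp [hb, hj, hE]
      · simp [hb, hj]
    rw [hnum, Finset.sum_div]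
    refine Finset.sum_congr rfl fun y _ => ?_
    rw [← Finset.sum_mul, hcol' y]
    ring
  have hcm0 : ∀ j : Fin n,
      cmI μ (fun ξ => (∀ i ∈ τ, ξ i = true) ∧ ξ v = false) j
        = ∑ x : Fin n → Bool, ∑ y : Fin n → Bool, γ (x, y) * b (x j) := by
    intro j
    unfold cmI
    have hnum : prI μ (fun ξ => ((∀ i ∈ τ, ξ i = true) ∧ ξ v = false) ∧ ξ j = true)
        = ∑ x : Fin n → Bool,
            (if (∀ i ∈ τ, x i = true) ∧ x v = false then μ x else 0) * b (x j) := by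
      refine Finset.sum_congr rfl fun x _ => ?_
      by_cases hj : x j = true
      · by_cases hE : (∀ i ∈ τ, x i = true) ∧ x v = false <;> simp [hb, hj, hE]
      · simp [hb, hj]
    rw [hnum, Finset.sum_div]
    refine Finset.sum_congr rfl fun x _ => ?_
    rw [← Finset.sum_mul, hrow' x]
    ring
  -- pointwise bound on Hamming distance for coupled pairs
  have hham : ∀ x y : Fin n → Bool, γ (x, y) ≠ 0 →
      (∑ j : Fin n, |b (y j) - b (x j)|) ≤ 2 := by
    intro x y hne
    obtain ⟨hxτ, hxv⟩ := hx x y hne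
    obtain ⟨hyτ, hyv⟩ := hy x y hne
    obtain ⟨-, hcard⟩ := hsupp x y hne
    have heq : ∀ j : Fin n, |b (y j) - b (x j)| = if x j = y j then 0 else 1 := by
      intro j
      cases hxj : x j <;> cases hyj : y j <;> simp [hb]
    rw [Finset.sum_congr rfl fun j _ => heq j]
    have hsb : ∑ j : Fin n, (if x j = y j then (0:ℝ) else 1)
        = ((Finset.univ.filter fun j => ¬ (x j = y j)).card : ℝ) := by
      rw [← Finset.sum_boole]
      exact Finset.sum_congr rfl fun j _ => by by_cases h : x j = y j <;> simp [h]
    rw [hsb]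
    have hsub : (Finset.univ.filter fun j => ¬ (x j = y j))
        ⊆ insert v (Finset.univ.filter fun j => j ∉ τ ∧ j ≠ v ∧ x j ≠ y j) := by
      intro j hj
      simp only [Finset.mem_filter, Finset.mem_univ, true_and] at hj
      by_cases hjv : j = v
      · simp [hjv]
      · refine Finset.mem_insert_of_mem ?_
        simp only [Finset.mem_filter, Finset.mem_univ, true_and]
        refine ⟨fun hjτ => hj ?_, hjv, hj⟩
        rw [hxτ j hjτ, hyτ j hjτ]
    have hle := Finset.card_le_card hsub
    have h2 : (Finset.univ.filter fun j => ¬ (x j = y j)).card ≤ 2 := by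
      have hins := Finset.card_insert_le v
        (Finset.univ.filter fun j => j ∉ τ ∧ j ≠ v ∧ x j ≠ y j)
      omega
    exact_mod_cast h2
  -- put everything together
  calc ∑ j : Fin n, |cmI μ (fun ξ => (∀ i ∈ τ, ξ i = true) ∧ ξ v = true) j
          - cmI μ (fun ξ => (∀ i ∈ τ, ξ i = true) ∧ ξ v = false) j|
      = ∑ j : Fin n, |∑ x : Fin n → Bool, ∑ y : Fin n → Bool,
          γ (x, y) * (b (y j) - b (x j))| := by
        refine Finset.sum_congr rfl fun j _ => ?_
        rw [hcm1 j, hcm0 j, ← Finset.sum_sub_distrib]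
        congr 1
        refine Finset.sum_congr rfl fun x _ => ?_
        rw [← Finset.sum_sub_distrib]
        exact Finset.sum_congr rfl fun y _ => by ring
    _ ≤ ∑ j : Fin n, ∑ x : Fin n → Bool, ∑ y : Fin n → Bool,
          γ (x, y) * |b (y j) - b (x j)| := by
        refine Finset.sum_le_sum fun j _ => ?_
        refine (Finset.abs_sum_le_sum_abs _ _).trans ?_
        refine Finset.sum_le_sum fun x _ => ?_
        refine (Finset.abs_sum_le_sum_abs _ _).trans ?_
        refine Finset.sum_le_sum fun y _ => ?_
        rw [abs_mul, abs_of_nonneg (hγ0 _)]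
    _ = ∑ x : Fin n → Bool, ∑ y : Fin n → Bool,
          γ (x, y) * ∑ j : Fin n, |b (y j) - b (x j)| := by
        rw [Finset.sum_comm]
        refine Finset.sum_congr rfl fun x _ => ?_
        rw [Finset.sum_comm]
        refine Finset.sum_congr rfl fun y _ => ?_
        rw [Finset.mul_sum]
    _ ≤ ∑ x : Fin n → Bool, ∑ y : Fin n → Bool, γ (x, y) * 2 := by
        refine Finset.sum_le_sum fun x _ => Finset.sum_le_sum fun y _ => ?_
        by_cases hne : γ (x, y) = 0
        · simp [hne]
        · exact mul_le_mul_of_nonneg_left (hham x y hne) (hγ0 _)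
    _ = 2 := by
        have hmm : ∑ x : Fin n → Bool, ∑ y : Fin n → Bool, γ (x, y) * 2
            = (∑ x : Fin n → Bool, ∑ y : Fin n → Bool, γ (x, y)) * 2 := by
          rw [Finset.sum_mul]
          exact Finset.sum_congr rfl fun x _ => by rw [Finset.sum_mul]
        rw [hmm, htot, one_mul]
end
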